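/- arXiv:2310.14415 — 5 statements merged into one kernel-verified Lean document; each statement's English description precedes it below -/
import Mathlib

section
/- Let n ∈ ℕ and let w > 0 be a real number satisfying w·e^w = (8n+1)/(8e). Then the real number g := (8n+1)·π/(4w) satisfies θ(g) = π·n; that is, the closed-form expression gₙ = (8n+1)π / (4·W₀((8n+1)/(8e))) in terms of the Lambert W-function gives the n-th Gram point of the core. -/
/-- The Riemann–Siegel theta function (approximate form):
`θ(t) = (t/2)·log(t/(2π)) − t/2 − π/8`. -/
noncomputable def rsTheta (t : ℝ) : ℝ :=
  t / 2 * Real.log (t / (2 * Real.pi)) - t / 2 - Real.pi / 8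

/-- If `w > 0` satisfies `w·e^w = (8n+1)/(8e)` (i.e. `w = W₀((8n+1)/(8e))`), then
`g = (8n+1)π/(4w)` satisfies `θ(g) = π·n`: the Lambert-W closed form gives the
`n`-th Gram point of the core. -/
theorem gram_point_lambertW (n : ℕ) (w : ℝ) (hw : 0 < w)
    (hW : w * Real.exp w = (8 * (n : ℝ) + 1) / (8 * Real.exp 1)) :
    rsTheta ((8 * (n : ℝ) + 1) * Real.pi / (4 * w)) = Real.pi * n := by
  have hpi := Real.pi_pos
  have hkey : (8 * (n : ℝ) + 1) = 8 * w * Real.exp (w + 1) := by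
    have := Real.exp_pos 1
    field_simp at hW
    rw [Real.exp_add]
    linarith [hW]
  have hquot : (8 * (n : ℝ) + 1) * Real.pi / (4 * w) / (2 * Real.pi)
      = Real.exp (w + 1) := by
    rw [hkey]
    field_simp
    ring
  unfold rsTheta
  rw [hquot, Real.log_exp]
  have hw' : w ≠ 0 := ne_of_gt hw
  field_simp
  ring
end

section
/- Let n ∈ ℕ with n ≥ 2 and let w > 0 be a real number satisfying w·e^w = (8n−11)/(8e). Then the real number t := (8n−11)·π/(4w) satisfies θ(t) = (n − 3/2)·π, and consequently Z₀(t) = cos(θ(t)) = 0; that is, the closed-form expression t⁰ₙ = (8n−11)π / (4·W₀((8n−11)/(8e))) in terms of the Lambert W-function gives a real zero of the core function Z₀. -/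
/-- The core function `Z₀(t) = cos(θ(t))`. -/
noncomputable def coreZ (t : ℝ) : ℝ := Real.cos (rsTheta t)

/-- If `n ≥ 2` and `w > 0` satisfies `w·e^w = (8n−11)/(8e)` (i.e.
`w = W₀((8n−11)/(8e))`), then `t = (8n−11)π/(4w)` satisfies `θ(t) = (n − 3/2)·π`,
and consequently `Z₀(t) = 0`: the Lambert-W closed form gives a real zero of the core. -/
theorem core_zero_lambertW (n : ℕ) (hn : 2 ≤ n) (w : ℝ) (hw : 0 < w)
    (hW : w * Real.exp w = (8 * (n : ℝ) - 11) / (8 * Real.exp 1)) :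
    rsTheta ((8 * (n : ℝ) - 11) * Real.pi / (4 * w)) = ((n : ℝ) - 3 / 2) * Real.pi ∧
    coreZ ((8 * (n : ℝ) - 11) * Real.pi / (4 * w)) = 0 := by
  have hpi := Real.pi_pos
  have hn2 : (2 : ℝ) ≤ (n : ℝ) := by exact_mod_cast hn
  have hepos := Real.exp_pos (1 : ℝ)
  have hW' : w * Real.exp w * (8 * Real.exp 1) = 8 * (n : ℝ) - 11 := by
    field_simp at hW; linarith [hW]
  have hkey : (8 * (n : ℝ) - 11) * Real.pi / (4 * w) / (2 * Real.pi)
      = Real.exp (w + 1) := by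
    rw [Real.exp_add]
    field_simp
    nlinarith [hW', Real.pi_pos]
  have hlog : Real.log ((8 * (n : ℝ) - 11) * Real.pi / (4 * w) / (2 * Real.pi))
      = w + 1 := by rw [hkey, Real.log_exp]
  have htheta : rsTheta ((8 * (n : ℝ) - 11) * Real.pi / (4 * w))
      = ((n : ℝ) - 3 / 2) * Real.pi := by
    unfold rsTheta
    rw [hlog]
    field_simp
    ring
  refine ⟨htheta, ?_⟩
  unfold coreZ
  rw [htheta, Real.cos_eq_zero_iff]
  exact ⟨(n : ℤ) - 2, by push_cast; ring⟩
end

section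
/- (First-order approximation of the discriminant is the classical Gram law.) Fix N ∈ ℕ, n ∈ ℕ, and a real number g₀ > 0 with θ(g₀) = π·n. Let g : ℝ → ℝ be differentiable at 0 with g(0) = g₀, and define Δ(r) := Z_N(g(r); (r, r, …, r)) (the discriminant of the linear curve, with extremal point g(r)). Then Δ is differentiable at 0 and Δ'(0) = Σ_{k=1}^N cos(θ(g₀) − log(k+1)·g₀)/√(k+1); in particular Δ'(0) equals the derivative at 0 of the map r ↦ Z_N(g₀; (r, …, r)), so the first-order Taylor approximation of Δ(r) at r = 0 is Z_N(g₀; (r,…,r)), the quantity appearing in the classical Gram law. -/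
/-- The `N`-th section
`Z_N(t; a) = cos(θ(t)) + Σ_{k=1}^N (aₖ/√(k+1))·cos(θ(t) − log(k+1)·t)`,
with `a : Fin N → ℝ` and the coordinate `k : Fin N` playing the role of the
paper's index `k+1 = k.val + 2`. -/
noncomputable def sectionZ (N : ℕ) (t : ℝ) (a : Fin N → ℝ) : ℝ :=
  Real.cos (rsTheta t) +
    ∑ k : Fin N, a k / Real.sqrt ((k : ℕ) + 2) *
      Real.cos (rsTheta t - Real.log ((k : ℕ) + 2) * t)

/-!
Along the diagonal, `Z_N(t; (r, …, r)) = cos θ(t) + r · S(t)` with `S = gramSum N`. At a Gram point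
`sin θ(g₀) = 0`, so `r ↦ cos θ(g(r))` is stationary at `0`, and since the factor `r` vanishes
at `0`, the derivative of `r ↦ r · S(g(r))` there only sees the value `S(g₀)`.
-/

open Real

theorem hasDerivAt_sub_smul_of_continuousAt {E : Type*} [NormedAddCommGroup E] [NormedSpace ℝ E]
    {f : ℝ → E} {a : ℝ} (hf : ContinuousAt f a) :
    HasDerivAt (fun r => (r - a) • f r) (f a) a := by
  rw [hasDerivAt_iff_tendsto_slope]
  refine (hf.tendsto.mono_left nhdsWithin_le_nhds).congr' ?_
  filter_upwards [self_mem_nhdsWithin] with r hr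
  rw [slope_def_module, sub_self, zero_smul, sub_zero, smul_smul,
    inv_mul_cancel₀ (sub_ne_zero.2 hr), one_smul]

theorem differentiableAt_rsTheta {t : ℝ} (ht : t ≠ 0) : DifferentiableAt ℝ rsTheta t := by
  unfold rsTheta
  have hlog : DifferentiableAt ℝ (fun t : ℝ => Real.log (t / (2 * π))) t :=
    (differentiableAt_id.div_const _).log (by positivity)
  fun_prop

theorem hasDerivAt_cos_comp_of_sin_eq_zero {φ : ℝ → ℝ} {φ' x : ℝ} (hφ : HasDerivAt φ φ' x)
    (hsin : sin (φ x) = 0) : HasDerivAt (fun r => cos (φ r)) 0 x := by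
  simpa [hsin] using hφ.cos

noncomputable def gramSum (N : ℕ) (t : ℝ) : ℝ :=
  ∑ k : Fin N, cos (rsTheta t - log ((k : ℕ) + 2) * t) / √((k : ℕ) + 2)

theorem sectionZ_const (N : ℕ) (t r : ℝ) :
    sectionZ N t (fun _ => r) = cos (rsTheta t) + r * gramSum N t := by
  simp only [sectionZ, gramSum, Finset.mul_sum]
  congr 1
  exact Finset.sum_congr rfl fun k _ => by ring

theorem continuousAt_gramSum (N : ℕ) {t : ℝ} (ht : ContinuousAt rsTheta t) :
    ContinuousAt (gramSum N) t := by
  unfold gramSum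
  fun_prop

/-- First-order approximation of the discriminant is the classical Gram law:
with `g₀` a Gram point (`θ(g₀) = π·n`, `g₀ > 0`), `g` differentiable at `0` with
`g(0) = g₀`, the discriminant of the linear curve `Δ(r) = Z_N(g(r); (r,…,r))` is
differentiable at `0` with derivative `Σ_{k=1}^N cos(θ(g₀) − log(k+1)·g₀)/√(k+1)`,
which is also the derivative at `0` of `r ↦ Z_N(g₀; (r,…,r))`. -/
theorem discriminant_first_order_is_gram_law (N : ℕ) (n : ℕ) (g₀ : ℝ)
    (hg₀ : 0 < g₀) (hGram : rsTheta g₀ = Real.pi * n)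
    (g : ℝ → ℝ) (hg : DifferentiableAt ℝ g 0) (hg0 : g 0 = g₀) :
    HasDerivAt (fun r : ℝ => sectionZ N (g r) (fun _ => r))
      (∑ k : Fin N,
        Real.cos (rsTheta g₀ - Real.log ((k : ℕ) + 2) * g₀) /
          Real.sqrt ((k : ℕ) + 2)) 0 ∧
    HasDerivAt (fun r : ℝ => sectionZ N g₀ (fun _ => r))
      (∑ k : Fin N,
        Real.cos (rsTheta g₀ - Real.log ((k : ℕ) + 2) * g₀) /
          Real.sqrt ((k : ℕ) + 2)) 0 := by
  have hθ : DifferentiableAt ℝ rsTheta (g 0) := differentiableAt_rsTheta (hg0 ▸ hg₀.ne')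
  have hsin : sin (rsTheta (g 0)) = 0 := by rw [hg0, hGram, mul_comm, sin_nat_mul_pi]
  have hcos : HasDerivAt (fun r => cos (rsTheta (g r))) 0 0 :=
    hasDerivAt_cos_comp_of_sin_eq_zero (hθ.hasDerivAt.comp 0 hg.hasDerivAt) hsin
  have hsum : ContinuousAt (fun r => gramSum N (g r)) 0 :=
    (continuousAt_gramSum N hθ.continuousAt).comp hg.continuousAt
  have hlin {f : ℝ → ℝ} (hf : ContinuousAt f 0) : HasDerivAt (fun r => r * f r) (f 0) 0 := by
    simpa using hasDerivAt_sub_smul_of_continuousAt hf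
  simp_rw [sectionZ_const]
  constructor
  · exact (hcos.add (hlin hsum)).congr_deriv (by rw [zero_add, hg0]; rfl)
  · exact ((hasDerivAt_const 0 _).add (hlin continuousAt_const)).congr_deriv (zero_add _)
end

section
/- (Lemma 7.2: implicit derivative of the extremal point.) Fix N ∈ ℕ, k ∈ {1,…,N}, a ∈ ℝ^N, and g⋆ > 0. Let g : ℝ → ℝ be differentiable at 0 with g(0) = g⋆, and suppose there is ε₀ > 0 such that for every ε with |ε| < ε₀ the derivative of t ↦ Z_N(t; a + ε·eₖ) vanishes at t = g(ε), where eₖ is the k-th standard basis vector (so g(ε) is a critical point of the perturbed section). Suppose also that D := (the second derivative of t ↦ Z_N(t; a) at g⋆) is nonzero. Then g'(0) = sin(θ(g⋆) − log(k+1)·g⋆)·log(g⋆/(2π(k+1)²)) / (2·√(k+1)·D). In particular, if a = 0 and g⋆ > 2π satisfies θ(g⋆) = π·n for some n ∈ ℕ, then D = ((−1)^{n+1}/4)·(log(g⋆/(2π)))² ≠ 0 and g'(0) = 2·(−1)^{n+1}·sin(θ(g⋆) − log(k+1)·g⋆)·log(g⋆/(2π(k+1)²)) / (√(k+1)·(log(g⋆/(2π)))²).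 -/
open Real Filter Topology

lemma mul_deriv_add_eq_zero_of_eventually_eq_zero {f φ g : ℝ → ℝ} {f' : ℝ}
    (hf : HasDerivAt f f' (g 0)) (hφ : DifferentiableAt ℝ φ (g 0))
    (hg : DifferentiableAt ℝ g 0) (h : ∀ᶠ ε in 𝓝 0, f (g ε) + ε * φ (g ε) = 0) :
    f' * deriv g 0 + φ (g 0) = 0 := by
  have hF := (hf.comp 0 hg.hasDerivAt).add
    ((hasDerivAt_id' 0).mul (hφ.hasDerivAt.comp 0 hg.hasDerivAt))
  have h0 : HasDerivAt (fun ε => f (g ε) + ε * φ (g ε)) 0 0 :=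
    (hasDerivAt_const 0 0).congr_of_eventuallyEq h
  simpa using hF.unique h0

noncomputable def rsThetaDeriv (t : ℝ) : ℝ := log (t / (2 * π)) / 2

lemma hasDerivAt_log_div_two_pi {t : ℝ} (ht : t ≠ 0) :
    HasDerivAt (fun t => log (t / (2 * π))) t⁻¹ t := by
  convert ((hasDerivAt_id' t).div_const (2 * π)).log (by positivity) using 1
  field_simp

lemma hasDerivAt_rsTheta {t : ℝ} (ht : t ≠ 0) : HasDerivAt rsTheta (rsThetaDeriv t) t := by
  have h := ((((hasDerivAt_id' t).div_const 2).mul (hasDerivAt_log_div_two_pi ht)).sub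
    ((hasDerivAt_id' t).div_const 2)).sub_const (π / 8)
  refine h.congr_deriv ?_
  unfold rsThetaDeriv
  field_simp
  ring

lemma hasDerivAt_rsThetaDeriv {t : ℝ} (ht : t ≠ 0) :
    HasDerivAt rsThetaDeriv (2 * t)⁻¹ t :=
  (hasDerivAt_log_div_two_pi ht).div_const 2 |>.congr_deriv (by ring)

lemma rsThetaDeriv_sub_log {t m : ℝ} (ht : t ≠ 0) (hm : 0 < m) :
    rsThetaDeriv t - log m = log (t / (2 * π * m ^ 2)) / 2 := by
  rw [rsThetaDeriv, ← div_div t (2 * π), log_div (div_ne_zero ht (by positivity)) (by positivity),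
    log_pow]
  push_cast
  ring

section PhaseCos

noncomputable def phaseCos (c t : ℝ) : ℝ := cos (rsTheta t - c * t)

noncomputable def phaseCosDeriv (c t : ℝ) : ℝ :=
  -sin (rsTheta t - c * t) * (rsThetaDeriv t - c)

noncomputable def phaseCosDeriv2 (c t : ℝ) : ℝ :=
  -cos (rsTheta t - c * t) * (rsThetaDeriv t - c) ^ 2 - sin (rsTheta t - c * t) * (2 * t)⁻¹

variable (c : ℝ) {t : ℝ}

lemma hasDerivAt_rsTheta_sub_mul (ht : t ≠ 0) :
    HasDerivAt (fun t => rsTheta t - c * t) (rsThetaDeriv t - c) t :=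
  (hasDerivAt_rsTheta ht).sub ((hasDerivAt_id' t).const_mul c) |>.congr_deriv (by ring)

lemma hasDerivAt_phaseCos (ht : t ≠ 0) : HasDerivAt (phaseCos c) (phaseCosDeriv c t) t :=
  (hasDerivAt_rsTheta_sub_mul c ht).cos.congr_deriv (by unfold phaseCosDeriv; ring)

lemma hasDerivAt_phaseCosDeriv (ht : t ≠ 0) :
    HasDerivAt (phaseCosDeriv c) (phaseCosDeriv2 c t) t := by
  refine ((hasDerivAt_rsTheta_sub_mul c ht).sin.neg.mul
    ((hasDerivAt_rsThetaDeriv ht).sub_const c)).congr_deriv ?_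
  simp only [phaseCosDeriv2, Pi.neg_apply]
  ring

lemma phaseCosDeriv2_zero_of_rsTheta_eq {n : ℕ} (hn : rsTheta t = π * n) :
    phaseCosDeriv2 0 t = (-1) ^ (n + 1) / 4 * log (t / (2 * π)) ^ 2 := by
  have hcos : cos (rsTheta t) = (-1) ^ n := by
    rw [hn, mul_comm]
    exact cos_nat_mul_pi n
  have hsin : sin (rsTheta t) = 0 := by
    rw [hn, mul_comm]
    exact sin_nat_mul_pi n
  simp only [phaseCosDeriv2, zero_mul, sub_zero, hcos, hsin, rsThetaDeriv]
  ring

end PhaseCos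

section PhaseSum

/-- `Z_N(·; a)` and its `t`-derivatives all have this shape; `cos θ(t)` is the frequency-`0`
term `f 0 t`. -/
noncomputable def phaseSum (N : ℕ) (a : Fin N → ℝ) (f : ℝ → ℝ → ℝ) (t : ℝ) : ℝ :=
  f 0 t + ∑ j : Fin N, a j / √((j : ℕ) + 2) * f (log ((j : ℕ) + 2)) t

variable {N : ℕ} (a : Fin N → ℝ)

lemma sectionZ_eq_phaseSum : (fun t => sectionZ N t a) = phaseSum N a phaseCos := by
  ext t
  simp [sectionZ, phaseSum, phaseCos]

lemma hasDerivAt_phaseSum {f f' : ℝ → ℝ → ℝ} {t : ℝ}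
    (hf : ∀ c, HasDerivAt (f c) (f' c t) t) :
    HasDerivAt (phaseSum N a f) (phaseSum N a f' t) t :=
  (hf 0).add (HasDerivAt.fun_sum fun _ _ => (hf _).const_mul _)

lemma deriv_sectionZ_eventuallyEq {t : ℝ} (ht : t ≠ 0) :
    deriv (fun t => sectionZ N t a) =ᶠ[𝓝 t] phaseSum N a phaseCosDeriv := by
  filter_upwards [isOpen_ne.mem_nhds ht] with s hs
  rw [sectionZ_eq_phaseSum]
  exact (hasDerivAt_phaseSum a fun c => hasDerivAt_phaseCos c hs).deriv

lemma deriv_deriv_sectionZ {t : ℝ} (ht : t ≠ 0) :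
    deriv (deriv fun t => sectionZ N t a) t = phaseSum N a phaseCosDeriv2 t := by
  rw [(deriv_sectionZ_eventuallyEq a ht).deriv_eq]
  exact (hasDerivAt_phaseSum a fun c => hasDerivAt_phaseCosDeriv c ht).deriv

lemma phaseSum_add_smul_single (k : Fin N) (ε : ℝ) (f : ℝ → ℝ → ℝ) (t : ℝ) :
    phaseSum N (a + ε • Pi.single k 1) f t =
      phaseSum N a f t + ε * (f (log ((k : ℕ) + 2)) t / √((k : ℕ) + 2)) := by
  simp only [phaseSum, Pi.add_apply, Pi.smul_apply, smul_eq_mul, add_div, add_mul,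
    Finset.sum_add_distrib, Pi.single_apply, mul_ite, mul_one, mul_zero, ite_div, zero_div,
    ite_mul, zero_mul, Finset.sum_ite_eq', Finset.mem_univ, if_true]
  ring

lemma phaseSum_zero (f : ℝ → ℝ → ℝ) (t : ℝ) : phaseSum N 0 f t = f 0 t := by
  simp [phaseSum]

end PhaseSum

lemma mul_deriv_add_eq_zero_of_deriv_sectionZ_eq_zero {N : ℕ} {k : Fin N} {a : Fin N → ℝ}
    {gs ε₀ : ℝ} {g : ℝ → ℝ} (hgs : gs ≠ 0) (hg : DifferentiableAt ℝ g 0) (hg0 : g 0 = gs)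
    (hε₀ : 0 < ε₀) (hcrit : ∀ ε : ℝ, |ε| < ε₀ →
      deriv (fun t => sectionZ N t (a + ε • (Pi.single k 1 : Fin N → ℝ))) (g ε) = 0) :
    phaseSum N a phaseCosDeriv2 gs * deriv g 0 +
      phaseCosDeriv (log ((k : ℕ) + 2)) gs / √((k : ℕ) + 2) = 0 := by
  have hequation : ∀ᶠ ε in 𝓝 0, phaseSum N a phaseCosDeriv (g ε) +
      ε * (phaseCosDeriv (log ((k : ℕ) + 2)) (g ε) / √((k : ℕ) + 2)) = 0 := by
    filter_upwards [hg.continuousAt.eventually_ne (hg0.trans_ne hgs),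
      Metric.ball_mem_nhds 0 hε₀] with ε hgε hε
    rw [← phaseSum_add_smul_single, ← (deriv_sectionZ_eventuallyEq _ hgε).eq_of_nhds]
    exact hcrit ε (by simpa using hε)
  subst hg0
  exact mul_deriv_add_eq_zero_of_eventually_eq_zero
    (hasDerivAt_phaseSum a fun c => hasDerivAt_phaseCosDeriv c hgs)
    ((hasDerivAt_phaseCosDeriv _ hgs).differentiableAt.div_const _) hg hequation

/-- Lemma 7.2: implicit derivative of the extended extremal point. If `g(ε)` is a
critical point of `t ↦ Z_N(t; a + ε·eₖ)` for all small `ε`, `g` is differentiable at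
`0` with `g(0) = g⋆ > 0`, and the second derivative `D` of `t ↦ Z_N(t; a)` at `g⋆` is
nonzero, then `g'(0) = sin(θ(g⋆) − log(k+1)·g⋆)·log(g⋆/(2π(k+1)²))/(2·√(k+1)·D)`.
In particular, if `a = 0` and `g⋆ > 2π` is a Gram point `θ(g⋆) = π·n`, then
`D = ((−1)^{n+1}/4)·log²(g⋆/(2π))` and
`g'(0) = 2·(−1)^{n+1}·sin(θ(g⋆) − log(k+1)·g⋆)·log(g⋆/(2π(k+1)²))/(√(k+1)·log²(g⋆/(2π)))`. -/
theorem extremal_point_implicit_deriv (N : ℕ) (k : Fin N) (a : Fin N → ℝ)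
    (gs : ℝ) (hgs : 0 < gs) (g : ℝ → ℝ) (hg : DifferentiableAt ℝ g 0)
    (hg0 : g 0 = gs)
    (hcrit : ∃ ε₀ > (0 : ℝ), ∀ ε : ℝ, |ε| < ε₀ →
      deriv (fun t => sectionZ N t (a + ε • (Pi.single k 1 : Fin N → ℝ))) (g ε) = 0)
    (hD : deriv (deriv (fun t => sectionZ N t a)) gs ≠ 0) :
    deriv g 0 =
      Real.sin (rsTheta gs - Real.log ((k : ℕ) + 2) * gs) *
        Real.log (gs / (2 * Real.pi * ((k : ℕ) + 2) ^ 2)) /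
        (2 * Real.sqrt ((k : ℕ) + 2) *
          deriv (deriv (fun t => sectionZ N t a)) gs) ∧
    (a = 0 → ∀ n : ℕ, 2 * Real.pi < gs → rsTheta gs = Real.pi * n →
      deriv (deriv (fun t => sectionZ N t a)) gs =
        ((-1 : ℝ) ^ (n + 1) / 4) * (Real.log (gs / (2 * Real.pi))) ^ 2 ∧
      deriv g 0 =
        2 * (-1 : ℝ) ^ (n + 1) *
          Real.sin (rsTheta gs - Real.log ((k : ℕ) + 2) * gs) *
          Real.log (gs / (2 * Real.pi * ((k : ℕ) + 2) ^ 2)) /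
          (Real.sqrt ((k : ℕ) + 2) * (Real.log (gs / (2 * Real.pi))) ^ 2)) := by
  obtain ⟨ε₀, hε₀, hcrit⟩ := hcrit
  have himplicit := mul_deriv_add_eq_zero_of_deriv_sectionZ_eq_zero hgs.ne' hg hg0 hε₀ hcrit
  rw [phaseCosDeriv, rsThetaDeriv_sub_log hgs.ne' (by positivity)] at himplicit
  rw [deriv_deriv_sectionZ a hgs.ne'] at hD ⊢
  have hderiv : deriv g 0 = sin (rsTheta gs - log ((k : ℕ) + 2) * gs) *
      log (gs / (2 * π * ((k : ℕ) + 2) ^ 2)) / (2 * √((k : ℕ) + 2) *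
        phaseSum N a phaseCosDeriv2 gs) := by
    field_simp at himplicit ⊢
    linarith
  refine ⟨hderiv, ?_⟩
  rintro rfl n hgs2 hgram
  have hD0 := (phaseSum_zero (N := N) phaseCosDeriv2 gs).trans
    (phaseCosDeriv2_zero_of_rsTheta_eq hgram)
  refine ⟨hD0, ?_⟩
  have hL : log (gs / (2 * π)) ≠ 0 := (log_pos ((one_lt_div (by positivity)).2 hgs2)).ne'
  have hsign : ((-1 : ℝ) ^ (n + 1)) ^ 2 = 1 := by
    rw [← pow_mul, mul_comm, pow_mul, neg_one_sq, one_pow]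
  rw [hderiv, hD0]
  field_simp
  rw [hsign]
  ring
end

section
/- (Proposition 7.2: mixed second partial of the Gram discriminant at the origin.) Fix n ∈ ℕ, a real g₀ > 2π with θ(g₀) = π·n, and integers k₁, k₂ ≥ 1. Define F(t; ε₁, ε₂) := cos(θ(t)) + (ε₁/√(k₁+1))·cos(θ(t) − log(k₁+1)·t) + (ε₂/√(k₂+1))·cos(θ(t) − log(k₂+1)·t). Let g : ℝ² → ℝ be continuously differentiable on a neighborhood U of (0,0) with g(0,0) = g₀, and assume that for every (ε₁,ε₂) ∈ U the t-derivative of F(·; ε₁, ε₂) vanishes at t = g(ε₁,ε₂). Define Δ(ε₁,ε₂) := F(g(ε₁,ε₂); ε₁, ε₂) and, for ε₂ near 0, D₁(ε₂) := the derivative at 0 of the map ε₁ ↦ Δ(ε₁, ε₂). Then D₁ is differentiable at 0 with D₁'(0) = ((−1)^n / (log(g₀/(2π)))²) · [sin(log(k₁+1)·g₀)·log(g₀/(2π(k₁+1)²))/√(k₁+1)] · [sin(log(k₂+1)·g₀)·log(g₀/(2π(k₂+1)²))/√(k₂+1)]. -/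
/-- The two-parameter perturbation of the core,
`F(t; ε₁, ε₂) = cos(θ(t)) + (ε₁/√(k₁+1))·cos(θ(t) − log(k₁+1)·t)
              + (ε₂/√(k₂+1))·cos(θ(t) − log(k₂+1)·t)`. -/
noncomputable def pertF (k₁ k₂ : ℕ) (t ε₁ ε₂ : ℝ) : ℝ :=
  Real.cos (rsTheta t) +
    ε₁ / Real.sqrt ((k₁ : ℝ) + 1) *
      Real.cos (rsTheta t - Real.log ((k₁ : ℝ) + 1) * t) +
    ε₂ / Real.sqrt ((k₂ : ℝ) + 1) *
      Real.cos (rsTheta t - Real.log ((k₂ : ℝ) + 1) * t)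

/-!
Write `F = T₀ + ε₂ T_{k₂} + ε₁ T_{k₁}`, where `T_k(t) = cos(θ(t) − t log(k+1))/√(k+1)`, so that
`T₀ = cos ∘ θ`. As `F` is affine in `ε₁` and `g` follows critical points of `F`, the envelope
theorem gives `D₁(ε₂) = T_{k₁}(g(0, ε₂))`, hence `D₁'(0) = T_{k₁}'(g₀) · u'` with
`u' = ∂g/∂ε₂ (0, 0)`. Differentiating the critical-point equation
`T₀'(g(0, ε₂)) + ε₂ T_{k₂}'(g(0, ε₂)) = 0` at `ε₂ = 0` gives `T₀''(g₀) u' + T_{k₂}'(g₀) = 0`.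
At a Gram point `sin θ(g₀) = 0` and `cos θ(g₀) = (−1)ⁿ`, so `T₀''(g₀) = −(−1)ⁿ θ'(g₀)²` and
`T_k'(g₀) = (−1)ⁿ sin(g₀ log(k+1)) (θ'(g₀) − log(k+1)) / √(k+1)`, with `θ'(t) = log(t/(2π))/2`.
-/

open Real Filter Topology

theorem hasDerivAt_rsTheta_s9 {t : ℝ} (ht : 0 < t) :
    HasDerivAt rsTheta (log (t / (2 * π)) / 2) t := by
  have hlog : HasDerivAt (fun s => log (s / (2 * π))) t⁻¹ t :=
    (((hasDerivAt_id' t).div_const (2 * π)).log (by positivity)).congr_deriv (by field_simp)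
  exact (((((hasDerivAt_id' t).div_const 2).mul hlog).sub
    ((hasDerivAt_id' t).div_const 2)).sub_const (π / 8)).congr_deriv (by field_simp; ring)

-- The term of index `k + 1` in the Riemann–Siegel main sum `2 ∑ m^(-1/2) cos(θ(t) - t log m)`.
noncomputable def rsTerm (k : ℕ) (t : ℝ) : ℝ :=
  cos (rsTheta t - log ((k : ℝ) + 1) * t) / √((k : ℝ) + 1)

noncomputable def rsTermDeriv (k : ℕ) (t : ℝ) : ℝ :=
  -sin (rsTheta t - log ((k : ℝ) + 1) * t) * (log (t / (2 * π)) / 2 - log ((k : ℝ) + 1)) /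
    √((k : ℝ) + 1)

noncomputable def gramSlope (k : ℕ) (g₀ : ℝ) : ℝ :=
  sin (log ((k : ℝ) + 1) * g₀) * log (g₀ / (2 * π * ((k : ℝ) + 1) ^ 2)) / √((k : ℝ) + 1)

theorem rsTerm_zero (t : ℝ) : rsTerm 0 t = cos (rsTheta t) := by
  simp [rsTerm]

theorem rsTermDeriv_zero (t : ℝ) :
    rsTermDeriv 0 t = -sin (rsTheta t) * (log (t / (2 * π)) / 2) := by
  simp [rsTermDeriv]

theorem pertF_eq (k₁ k₂ : ℕ) (t ε₁ ε₂ : ℝ) :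
    pertF k₁ k₂ t ε₁ ε₂ = rsTerm 0 t + ε₂ * rsTerm k₂ t + ε₁ * rsTerm k₁ t := by
  rw [rsTerm_zero, pertF, rsTerm, rsTerm]
  ring

theorem hasDerivAt_rsTerm (k : ℕ) {t : ℝ} (ht : 0 < t) :
    HasDerivAt (rsTerm k) (rsTermDeriv k t) t :=
  ((((hasDerivAt_rsTheta_s9 ht).sub ((hasDerivAt_id' t).const_mul (log ((k : ℝ) + 1)))).cos).div_const
    (√((k : ℝ) + 1))).congr_deriv (by simp only [rsTermDeriv, Pi.sub_apply]; ring)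

theorem differentiableAt_rsTermDeriv (k : ℕ) {t : ℝ} (ht : 0 < t) :
    DifferentiableAt ℝ (rsTermDeriv k) t := by
  have hθ := (hasDerivAt_rsTheta_s9 ht).differentiableAt
  have : t / (2 * π) ≠ 0 := by positivity
  unfold rsTermDeriv
  fun_prop (disch := assumption)

theorem hasDerivAt_pertF (k₁ k₂ : ℕ) (ε₁ ε₂ : ℝ) {t : ℝ} (ht : 0 < t) :
    HasDerivAt (fun s => pertF k₁ k₂ s ε₁ ε₂)
      (rsTermDeriv 0 t + ε₂ * rsTermDeriv k₂ t + ε₁ * rsTermDeriv k₁ t) t := by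
  simp only [pertF_eq]
  exact ((hasDerivAt_rsTerm 0 ht).add ((hasDerivAt_rsTerm k₂ ht).const_mul ε₂)).add
    ((hasDerivAt_rsTerm k₁ ht).const_mul ε₁)

theorem hasDerivAt_comp_add_mul_comp {P Q u : ℝ → ℝ} {p u' : ℝ} (hP : HasDerivAt P p (u 0))
    (hQ : DifferentiableAt ℝ Q (u 0)) (hu : HasDerivAt u u' 0) :
    HasDerivAt (fun y => P (u y) + y * Q (u y)) (p * u' + Q (u 0)) 0 :=
  ((hP.comp 0 hu).add ((hasDerivAt_id' 0).mul (hQ.hasDerivAt.comp 0 hu))).congr_deriv (by simp)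

theorem deriv_pertF_comp_of_hasDerivAt_zero {k₁ k₂ : ℕ} {ε₂ : ℝ} {h : ℝ → ℝ}
    (hh : DifferentiableAt ℝ h 0) (hpos : 0 < h 0)
    (hcrit : HasDerivAt (fun t => pertF k₁ k₂ t 0 ε₂) 0 (h 0)) :
    deriv (fun ε₁ => pertF k₁ k₂ (h ε₁) ε₁ ε₂) 0 = rsTerm k₁ (h 0) := by
  have hsplit : (fun ε₁ => pertF k₁ k₂ (h ε₁) ε₁ ε₂) =
      fun ε₁ => pertF k₁ k₂ (h ε₁) 0 ε₂ + ε₁ * rsTerm k₁ (h ε₁) := by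
    funext ε₁
    simp only [pertF_eq]
    ring
  rw [hsplit, (hasDerivAt_comp_add_mul_comp hcrit (hasDerivAt_rsTerm k₁ hpos).differentiableAt
    hh.hasDerivAt).deriv, zero_mul, zero_add]

section GramPoint

variable {n : ℕ} {g₀ : ℝ}

theorem rsTermDeriv_of_gram (hGram : rsTheta g₀ = π * n) (hg₀ : 0 < g₀) (k : ℕ) :
    rsTermDeriv k g₀ = (-1) ^ n * gramSlope k g₀ / 2 := by
  have hlog : log (g₀ / (2 * π * ((k : ℝ) + 1) ^ 2)) =
      log (g₀ / (2 * π)) - 2 * log ((k : ℝ) + 1) := by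
    rw [← div_div, log_div (by positivity) (by positivity), log_pow]
    push_cast
    ring
  rw [rsTermDeriv, gramSlope, hGram, mul_comm π, sin_sub, sin_nat_mul_pi, cos_nat_mul_pi, hlog]
  ring

theorem hasDerivAt_rsTermDeriv_zero_of_gram (hGram : rsTheta g₀ = π * n) (hg₀ : 0 < g₀) :
    HasDerivAt (rsTermDeriv 0) (-(-1) ^ n * (log (g₀ / (2 * π)) / 2) ^ 2) g₀ := by
  have hθ' : DifferentiableAt ℝ (fun t => log (t / (2 * π)) / 2) g₀ := by
    have : g₀ / (2 * π) ≠ 0 := by positivity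
    fun_prop (disch := assumption)
  rw [funext rsTermDeriv_zero]
  refine ((hasDerivAt_rsTheta_s9 hg₀).sin.neg.mul hθ'.hasDerivAt).congr_deriv ?_
  rw [Pi.neg_apply, hGram, mul_comm π, sin_nat_mul_pi, cos_nat_mul_pi]
  ring

theorem slope_of_critical_curve (hGram : rsTheta g₀ = π * n) (hg₀ : 0 < g₀) {k : ℕ}
    {u : ℝ → ℝ} {u' : ℝ} (hu : HasDerivAt u u' 0) (hu₀ : u 0 = g₀)
    (hcrit : ∀ᶠ y in 𝓝 0, rsTermDeriv 0 (u y) + y * rsTermDeriv k (u y) = 0) :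
    (log (g₀ / (2 * π)) / 2) ^ 2 * u' = gramSlope k g₀ / 2 := by
  subst hu₀
  have h := (hasDerivAt_comp_add_mul_comp (hasDerivAt_rsTermDeriv_zero_of_gram hGram hg₀)
    (differentiableAt_rsTermDeriv k hg₀) hu).unique
    ((hasDerivAt_const 0 0).congr_of_eventuallyEq hcrit)
  rw [rsTermDeriv_of_gram hGram hg₀] at h
  have hsign : (-1 : ℝ) ^ n * (gramSlope k (u 0) / 2 - (log (u 0 / (2 * π)) / 2) ^ 2 * u') = 0 := by
    linear_combination h
  linarith [(mul_eq_zero.1 hsign).resolve_left (pow_ne_zero n (by norm_num))]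

end GramPoint

theorem discriminant_mixed_second_partial_general (n : ℕ) (g₀ : ℝ)
    (hg₀ : 2 * Real.pi < g₀) (hGram : rsTheta g₀ = Real.pi * n)
    (k₁ k₂ : ℕ)
    (g : ℝ × ℝ → ℝ) (U : Set (ℝ × ℝ)) (hU : U ∈ nhds ((0 : ℝ), (0 : ℝ)))
    (hgC1 : ContDiffOn ℝ 1 g U) (hg00 : g (0, 0) = g₀)
    (hcrit : ∀ p ∈ U, deriv (fun t => pertF k₁ k₂ t p.1 p.2) (g p) = 0) :
    HasDerivAt
      (fun ε₂ : ℝ =>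
        deriv (fun ε₁ : ℝ => pertF k₁ k₂ (g (ε₁, ε₂)) ε₁ ε₂) 0)
      (((-1 : ℝ) ^ n / (Real.log (g₀ / (2 * Real.pi))) ^ 2) *
        (Real.sin (Real.log ((k₁ : ℝ) + 1) * g₀) *
          Real.log (g₀ / (2 * Real.pi * ((k₁ : ℝ) + 1) ^ 2)) /
            Real.sqrt ((k₁ : ℝ) + 1)) *
        (Real.sin (Real.log ((k₂ : ℝ) + 1) * g₀) *
          Real.log (g₀ / (2 * Real.pi * ((k₂ : ℝ) + 1) ^ 2)) /
            Real.sqrt ((k₂ : ℝ) + 1))) 0 := by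
  have hg₀pos : 0 < g₀ := by linarith [pi_pos]
  have hg00pos : 0 < g (0, 0) := hg00 ▸ hg₀pos
  have hline : Tendsto (fun y : ℝ => ((0 : ℝ), y)) (𝓝 0) (𝓝 (0, 0)) :=
    (continuous_const.prodMk continuous_id).tendsto' 0 (0, 0) rfl
  have hdiff : ∀ᶠ y in 𝓝 (0 : ℝ), DifferentiableAt ℝ g (0, y) :=
    hline.eventually <| ((hgC1.contDiffAt hU).eventually (by simp)).mono fun _ hp =>
      hp.differentiableAt one_ne_zero
  obtain ⟨u', hu⟩ : ∃ u', HasDerivAt (fun y => g (0, y)) u' 0 :=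
    ⟨_, (hdiff.self_of_nhds.comp (0 : ℝ)
      ((differentiableAt_const (0 : ℝ)).prodMk differentiableAt_id)).hasDerivAt⟩
  have hpos : ∀ᶠ y in 𝓝 (0 : ℝ), 0 < g (0, y) :=
    hu.continuousAt.eventually (lt_mem_nhds hg00pos)
  have hstat : ∀ᶠ y in 𝓝 (0 : ℝ), HasDerivAt (fun t => pertF k₁ k₂ t 0 y) 0 (g (0, y)) := by
    filter_upwards [hline.eventually hU, hpos] with y hy hy'
    have h := hasDerivAt_pertF k₁ k₂ 0 y hy'
    rwa [← h.deriv, hcrit _ hy] at h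
  have hD₁ : (fun y => deriv (fun e => pertF k₁ k₂ (g (e, y)) e y) 0) =ᶠ[𝓝 0]
      fun y => rsTerm k₁ (g (0, y)) := by
    filter_upwards [hstat, hdiff, hpos] with y hy hd hy'
    exact deriv_pertF_comp_of_hasDerivAt_zero
      (hd.comp (0 : ℝ) (differentiableAt_id.prodMk (differentiableAt_const y))) hy' hy
  have hslope := slope_of_critical_curve (k := k₂) hGram hg₀pos hu hg00 <| by
    filter_upwards [hstat, hpos] with y hy hy'
    simpa using (hasDerivAt_pertF k₁ k₂ 0 y hy').unique hy
  refine (((hasDerivAt_rsTerm k₁ hg00pos).comp (h := fun y => g (0, y)) 0 hu).congr_of_eventuallyEq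
    hD₁).congr_deriv ?_
  have hL : log (g₀ / (2 * π)) ≠ 0 := (log_pos ((one_lt_div (by positivity)).2 hg₀)).ne'
  change _ = (-1) ^ n / log (g₀ / (2 * π)) ^ 2 * gramSlope k₁ g₀ * gramSlope k₂ g₀
  rw [hg00, rsTermDeriv_of_gram hGram hg₀pos]
  field_simp
  linear_combination (4 * gramSlope k₁ g₀) * hslope

/-- Proposition 7.2: mixed second partial of the Gram discriminant at the origin.
If `g : ℝ² → ℝ` is `C¹` near `(0,0)` with `g(0,0) = g₀` (a Gram point, `θ(g₀) = π·n`,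
`g₀ > 2π`), and `g(ε₁,ε₂)` is always a critical point of `F(·; ε₁, ε₂)`, then with
`Δ(ε₁,ε₂) = F(g(ε₁,ε₂); ε₁, ε₂)` and `D₁(ε₂) = (d/dε₁)|₀ Δ(ε₁,ε₂)`, the function
`D₁` is differentiable at `0` with the stated product value. -/
theorem discriminant_mixed_second_partial (n : ℕ) (g₀ : ℝ)
    (hg₀ : 2 * Real.pi < g₀) (hGram : rsTheta g₀ = Real.pi * n)
    (k₁ k₂ : ℕ) (hk₁ : 1 ≤ k₁) (hk₂ : 1 ≤ k₂)
    (g : ℝ × ℝ → ℝ) (U : Set (ℝ × ℝ)) (hU : U ∈ nhds ((0 : ℝ), (0 : ℝ)))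
    (hgC1 : ContDiffOn ℝ 1 g U) (hg00 : g (0, 0) = g₀)
    (hcrit : ∀ p ∈ U, deriv (fun t => pertF k₁ k₂ t p.1 p.2) (g p) = 0) :
    HasDerivAt
      (fun ε₂ : ℝ =>
        deriv (fun ε₁ : ℝ => pertF k₁ k₂ (g (ε₁, ε₂)) ε₁ ε₂) 0)
      (((-1 : ℝ) ^ n / (Real.log (g₀ / (2 * Real.pi))) ^ 2) *
        (Real.sin (Real.log ((k₁ : ℝ) + 1) * g₀) *
          Real.log (g₀ / (2 * Real.pi * ((k₁ : ℝ) + 1) ^ 2)) /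
            Real.sqrt ((k₁ : ℝ) + 1)) *
        (Real.sin (Real.log ((k₂ : ℝ) + 1) * g₀) *
          Real.log (g₀ / (2 * Real.pi * ((k₂ : ℝ) + 1) ^ 2)) /
            Real.sqrt ((k₂ : ℝ) + 1))) 0 :=
  discriminant_mixed_second_partial_general n g₀ hg₀ hGram k₁ k₂ g U hU hgC1 hg00 hcrit
end
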